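/- arXiv:1807.01446 — 9 statements merged into one kernel-verified Lean document; each statement's English description precedes it below -/
import Mathlib

section
/- Let X be a Hilbert space, T ∈ B(X) with a {1,3,7}-inverse S, and δT ∈ B(X) with I + S·δT invertible. If TS·δT = δT, then B = (I + S·δT)⁻¹S is a {1,3,7}-inverse of T̄ = T + δT: that is, T̄BT̄ = T̄, (T̄B)* = T̄B, and T̄B² = B. -/
theorem stmt_4 {X : Type*} [NormedAddCommGroup X] [InnerProductSpace ℂ X]
    [CompleteSpace X] (T S δT : X →L[ℂ] X)
    (h1 : T * S * T = T)
    (h3 : ContinuousLinearMap.adjoint (T * S) = T * S)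
    (h7 : T * S * S = S)
    (hinv : IsUnit (1 + S * δT))
    (hd : T * S * δT = δT) :
    (T + δT) * (Ring.inverse (1 + S * δT) * S) * (T + δT) = T + δT ∧
    ContinuousLinearMap.adjoint ((T + δT) * (Ring.inverse (1 + S * δT) * S)) =
      (T + δT) * (Ring.inverse (1 + S * δT) * S) ∧
    (T + δT) * (Ring.inverse (1 + S * δT) * S) * (Ring.inverse (1 + S * δT) * S) =
      Ring.inverse (1 + S * δT) * S := by
  set V := Ring.inverse (1 + S * δT) with hV
  have hUV : (1 + S * δT) * V = 1 := Ring.mul_inverse_cancel _ hinv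
  have hVU : V * (1 + S * δT) = 1 := Ring.inverse_mul_cancel _ hinv
  have hTU : T * (1 + S * δT) = T + δT := by
    rw [mul_add, mul_one, ← mul_assoc, hd]
  have hA : (T + δT) * V = T := by
    rw [← hTU, mul_assoc, hUV, mul_one]
  have hTSB : (T + δT) * (V * S) = T * S := by
    rw [← mul_assoc, hA]
  have hkey : (1 - T * S) * (1 + S * δT) = 1 - T * S := by
    have : T * S * (S * δT) = S * δT := by rw [← mul_assoc, h7]
    noncomm_ring [this]
  have hTSV : (1 - T * S) * V = 1 - T * S := by
    calc (1 - T * S) * V = (1 - T * S) * (1 + S * δT) * V := by rw [hkey]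
    _ = (1 - T * S) * ((1 + S * δT) * V) := by rw [mul_assoc]
    _ = 1 - T * S := by rw [hUV, mul_one]
  have h7' : T * S * (V * S) = V * S := by
    have h0 : (1 - T * S) * (V * S) = 0 := by
      rw [← mul_assoc, hTSV]
      have : (1 - T * S) * S = 0 := by noncomm_ring [h7]
      rw [this]
    have h0' : V * S - T * S * (V * S) = 0 := by
      rw [← h0]; noncomm_ring
    exact (sub_eq_zero.mp h0').symm
  refine ⟨?_, ?_, ?_⟩
  · rw [hTSB, mul_add, h1, hd]
  · rw [hTSB, h3]
  · rw [hTSB, h7']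
end

section
/- Let X be a Hilbert space, T ∈ B(X) with a {1,3,7}-inverse S, and δT ∈ B(X) with I + S·δT invertible. If TS·δT = δT, then (T + δT)·(I + S·δT)⁻¹S = TS. -/
theorem stmt_5 {X : Type*} [NormedAddCommGroup X] [InnerProductSpace ℂ X]
    [CompleteSpace X] (T S δT : X →L[ℂ] X)
    (h1 : T * S * T = T)
    (h3 : ContinuousLinearMap.adjoint (T * S) = T * S)
    (h7 : T * S * S = S)
    (hinv : IsUnit (1 + S * δT))
    (hd : T * S * δT = δT) :
    (T + δT) * (Ring.inverse (1 + S * δT) * S) = T * S := by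
  have key : T * (1 + S * δT) = T + δT := by
    rw [mul_add, mul_one, ← mul_assoc, hd]
  calc (T + δT) * (Ring.inverse (1 + S * δT) * S)
      = T * ((1 + S * δT) * Ring.inverse (1 + S * δT)) * S := by
        rw [← key]; noncomm_ring
    _ = T * S := by rw [Ring.mul_inverse_cancel _ hinv, mul_one]
end

section
/- Let X be a Hilbert space, T ∈ B(X) with a {1,3,7}-inverse S, and δT ∈ B(X) with I + S·δT invertible. If B = (I + S·δT)⁻¹S is a {1,3,7}-inverse of T̄ = T + δT, then R(T̄) ⊆ R(T). -/
/-!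
Write `P = T S` and `Q = (T + δT) B`. Both are self-adjoint, and the two defining identities of
`B = (I + S δT)⁻¹ S`, namely `(I + S δT) B = S` and `B (I + δT S) = S`, give `P Q = P` and
`Q P = Q`. Taking adjoints in the first, `Q P = P`, so `P = Q` and
`T S (T + δT) = (T + δT) B (T + δT) = T + δT`.
-/

theorem Ring.inverse_one_add_mul_mul_mul_one_add_mul {R : Type*} [Ring R] {a b : R}
    (hu : IsUnit (1 + a * b)) : Ring.inverse (1 + a * b) * a * (1 + b * a) = a := by
  rw [mul_assoc, show a * (1 + b * a) = (1 + a * b) * a by noncomm_ring,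
    Ring.inverse_mul_cancel_left _ _ hu]

theorem IsSelfAdjoint.eq_of_mul_eq_left {R : Type*} [Mul R] [StarMul R] {p q : R}
    (hp : IsSelfAdjoint p) (hq : IsSelfAdjoint q) (hpq : p * q = p) (hqp : q * p = q) :
    p = q := by
  rw [← hqp, ← hp.star_eq, ← hq.star_eq, ← star_mul, hpq, hp.star_eq]

section Perturbation

variable {R : Type*} [Ring R] {T S δ B : R}

theorem mul_mul_add_mul_eq_left (h1 : T * S * T = T) (hB : (1 + S * δ) * B = S) :
    T * S * ((T + δ) * B) = T * S := by
  have hP : T * S * (T + δ) = T * (1 + S * δ) := by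
    rw [mul_add, h1]; noncomm_ring
  rw [← mul_assoc, hP, mul_assoc, hB]

theorem add_mul_mul_mul_eq_left (hB1 : (T + δ) * B * (T + δ) = T + δ)
    (hB : B * (1 + δ * S) = S) : (T + δ) * B * (T * S) = (T + δ) * B := by
  have hB' : B = S - B * δ * S :=
    eq_sub_of_add_eq (by rw [mul_assoc, ← mul_one_add, hB])
  calc (T + δ) * B * (T * S) = (T + δ) * B * (T + δ) * S - (T + δ) * B * δ * S := by
        noncomm_ring
    _ = (T + δ) * (S - B * δ * S) := by rw [hB1]; noncomm_ring
    _ = (T + δ) * B := by rw [← hB']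

theorem mul_mul_add_eq_add_of_isSelfAdjoint [StarRing R] (h1 : T * S * T = T)
    (h3 : IsSelfAdjoint (T * S)) (hB1 : (T + δ) * B * (T + δ) = T + δ)
    (hB3 : IsSelfAdjoint ((T + δ) * B)) (hBl : (1 + S * δ) * B = S)
    (hBr : B * (1 + δ * S) = S) : T * S * (T + δ) = T + δ := by
  have hPQ : T * S = (T + δ) * B :=
    h3.eq_of_mul_eq_left hB3 (mul_mul_add_mul_eq_left h1 hBl)
      (add_mul_mul_mul_eq_left hB1 hBr)
  rw [hPQ, hB1]

end Perturbation

theorem stmt_6_general {X : Type*} [NormedAddCommGroup X] [InnerProductSpace ℂ X]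
    [CompleteSpace X] (T S δT : X →L[ℂ] X)
    (h1 : T * S * T = T)
    (h3 : ContinuousLinearMap.adjoint (T * S) = T * S)
    (hinv : IsUnit (1 + S * δT))
    (hB1 : (T + δT) * (Ring.inverse (1 + S * δT) * S) * (T + δT) = T + δT)
    (hB3 : ContinuousLinearMap.adjoint ((T + δT) * (Ring.inverse (1 + S * δT) * S)) =
      (T + δT) * (Ring.inverse (1 + S * δT) * S)) :
    LinearMap.range ((T + δT : X →L[ℂ] X) : X →ₗ[ℂ] X) ≤ LinearMap.range (T : X →ₗ[ℂ] X) := by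
  have hP : T * S * (T + δT) = T + δT :=
    mul_mul_add_eq_add_of_isSelfAdjoint h1 (ContinuousLinearMap.isSelfAdjoint_iff'.2 h3) hB1
      (ContinuousLinearMap.isSelfAdjoint_iff'.2 hB3) (Ring.mul_inverse_cancel_left _ _ hinv)
      (Ring.inverse_one_add_mul_mul_mul_one_add_mul hinv)
  rw [← hP, mul_assoc]
  exact LinearMap.range_comp_le_range _ _

theorem stmt_6 {X : Type*} [NormedAddCommGroup X] [InnerProductSpace ℂ X]
    [CompleteSpace X] (T S δT : X →L[ℂ] X)
    (h1 : T * S * T = T)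
    (h3 : ContinuousLinearMap.adjoint (T * S) = T * S)
    (h7 : T * S * S = S)
    (hinv : IsUnit (1 + S * δT))
    (hB1 : (T + δT) * (Ring.inverse (1 + S * δT) * S) * (T + δT) = T + δT)
    (hB3 : ContinuousLinearMap.adjoint ((T + δT) * (Ring.inverse (1 + S * δT) * S)) =
      (T + δT) * (Ring.inverse (1 + S * δT) * S))
    (hB7 : (T + δT) * (Ring.inverse (1 + S * δT) * S) * (Ring.inverse (1 + S * δT) * S) =
      Ring.inverse (1 + S * δT) * S) :
    LinearMap.range ((T + δT : X →L[ℂ] X) : X →ₗ[ℂ] X) ≤ LinearMap.range (T : X →ₗ[ℂ] X) :=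
  stmt_6_general T S δT h1 h3 hinv hB1 hB3
end

section
/- Let X be a Hilbert space and T ∈ B(X) with a core inverse S (i.e., S satisfies TST = T, STS = S, (TS)* = TS, ST² = T, TS² = S). Then TS·δT = δT holds if and only if ST·δT = δT, for any δT ∈ B(X). -/
theorem stmt_8 {X : Type*} [NormedAddCommGroup X] [InnerProductSpace ℂ X]
    [CompleteSpace X] (T S : X →L[ℂ] X)
    (h1 : T * S * T = T)
    (h2 : S * T * S = S)
    (h3 : ContinuousLinearMap.adjoint (T * S) = T * S)
    (h6 : S * T * T = T)
    (h7 : T * S * S = S) :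
    ∀ δT : X →L[ℂ] X, T * S * δT = δT ↔ S * T * δT = δT := by
  intro δT
  constructor
  · intro h
    calc S * T * δT = S * T * (T * S * δT) := by rw [h]
    _ = (S * T * T) * (S * δT) := by simp only [mul_assoc]
    _ = T * S * δT := by rw [h6, ← mul_assoc]
    _ = δT := h
  · intro h
    calc T * S * δT = T * S * (S * T * δT) := by rw [h]
    _ = (T * S * S) * (T * δT) := by simp only [mul_assoc]
    _ = S * T * δT := by rw [h7, ← mul_assoc]
    _ = δT := h
end

section
/- Let X be a Hilbert space, T ∈ B(X) with a core inverse S (satisfying TST = T, STS = S, (TS)* = TS, ST² = T, TS² = S), and δT ∈ B(X) with I + S·δT invertible and TS·δT = δT. Then B = (I + S·δT)⁻¹S is a core inverse of T̄ = T + δT: namely T̄BT̄ = T̄, BT̄B = B, (T̄B)* = T̄B, BT̄² = T̄, and T̄B² = B. -/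
theorem stmt_9 {X : Type*} [NormedAddCommGroup X] [InnerProductSpace ℂ X]
    [CompleteSpace X] (T S δT : X →L[ℂ] X)
    (h1 : T * S * T = T)
    (h2 : S * T * S = S)
    (h3 : ContinuousLinearMap.adjoint (T * S) = T * S)
    (h6 : S * T * T = T)
    (h7 : T * S * S = S)
    (hinv : IsUnit (1 + S * δT))
    (hd : T * S * δT = δT) :
    (T + δT) * (Ring.inverse (1 + S * δT) * S) * (T + δT) = T + δT ∧
    (Ring.inverse (1 + S * δT) * S) * (T + δT) * (Ring.inverse (1 + S * δT) * S) =
      Ring.inverse (1 + S * δT) * S ∧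
    ContinuousLinearMap.adjoint ((T + δT) * (Ring.inverse (1 + S * δT) * S)) =
      (T + δT) * (Ring.inverse (1 + S * δT) * S) ∧
    (Ring.inverse (1 + S * δT) * S) * (T + δT) * (T + δT) = T + δT ∧
    (T + δT) * (Ring.inverse (1 + S * δT) * S) * (Ring.inverse (1 + S * δT) * S) =
      Ring.inverse (1 + S * δT) * S := by
  set U : X →L[ℂ] X := 1 + S * δT with hU
  set V : X →L[ℂ] X := Ring.inverse U with hV
  have hUV : U * V = 1 := Ring.mul_inverse_cancel _ hinv
  have hVU : V * U = 1 := Ring.inverse_mul_cancel _ hinv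
  have hTU : T * U = T + δT := by
    rw [hU, mul_add, mul_one, ← mul_assoc, hd]
  have hTB : (T + δT) * (V * S) = T * S := by
    rw [← hTU, mul_assoc T U, ← mul_assoc U V, hUV, one_mul]
  have hSTU : S * T * U = S * T + S * δT := by
    rw [hU, mul_add, mul_one, ← mul_assoc (S * T) S δT, h2]
  have hTSU : T * S * U = T * S + S * δT := by
    rw [hU, mul_add, mul_one, ← mul_assoc (T * S) S δT, h7]
  have hsub : (1 - T * S) * U = 1 - T * S := by
    rw [sub_mul, one_mul, hTSU, hU]
    abel
  have hsubV : (1 - T * S) * V = 1 - T * S := by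
    conv_lhs => rw [← hsub, mul_assoc, hUV, mul_one]
  have h11 : T * S * (V * S) = V * S := by
    have hz : (1 - T * S) * (V * S) = 0 := by
      rw [← mul_assoc, hsubV, sub_mul, one_mul, h7, sub_self]
    have hz' : V * S - T * S * (V * S) = 0 := by rw [← hz, sub_mul, one_mul]
    exact (sub_eq_zero.mp hz').symm
  refine ⟨?_, ?_, ?_, ?_, ?_⟩
  · rw [hTB, ← hTU, ← mul_assoc, h1]
  · rw [mul_assoc, hTB, mul_assoc, ← mul_assoc S T S, h2]
  · rw [hTB]; exact h3
  · rw [← hTU]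
    have key : S * T * U * (T * U) = U * (T * U) := by
      calc S * T * U * (T * U) = (S * T + S * δT) * (T * U) := by rw [hSTU]
        _ = S * T * (T * U) + S * δT * (T * U) := add_mul _ _ _
        _ = T * U + S * δT * (T * U) := by rw [← mul_assoc (S * T) T U, h6]
        _ = U * (T * U) := by rw [hU, add_mul, one_mul]
    calc V * S * (T * U) * (T * U) = V * (S * T * U * (T * U)) := by
          simp only [mul_assoc]
      _ = V * (U * (T * U)) := by rw [key]
      _ = V * U * (T * U) := by rw [mul_assoc]
      _ = T * U := by rw [hVU, one_mul]
  · rw [hTB]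
    exact h11
end

section
/- Let X be a Hilbert space, T ∈ B(X) with a core inverse S, and δT ∈ B(X) with ‖S·δT‖ < 1. If TS·δT = δT, then B = (I + S·δT)⁻¹S is a core inverse of T̄ = T + δT and the norm bounds ‖S‖/(1 + ‖S·δT‖) ≤ ‖B‖ ≤ ‖S‖/(1 − ‖S·δT‖) hold. -/
/-!
Since `T S δT = δT`, the perturbed operator factors as `T + δT = T (I + S δT)`, so with
`B = (I + S δT)⁻¹ S` the projection `(T + δT) B` is still `T S`, which gives the three equations
of the core inverse involving it. The remaining two reduce to
`S (T + δT)² = (I + S δT)(T + δT)` and `(I - T S)(I + S δT) = I - T S`. The norm bounds come from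
`S = (I + S δT) B` and from the Neumann series for `(I + S δT)⁻¹`.
-/

structure IsCoreInverse {R : Type*} [Mul R] [Star R] (a x : R) : Prop where
  mul_inv_mul : a * x * a = a
  inv_mul_inv : x * a * x = x
  isSelfAdjoint_mul_inv : IsSelfAdjoint (a * x)
  inv_mul_mul_self : x * a * a = a
  mul_inv_mul_inv : a * x * x = x

namespace IsCoreInverse

variable {R : Type*} [Ring R] [Star R] {a x d : R}

lemma inv_mul_mul_of_mul_inv_mul (h : IsCoreInverse a x) (hd : a * x * d = d) :
    x * a * d = d := by
  calc x * a * d = x * a * (a * x * d) := by rw [hd]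
    _ = x * a * a * (x * d) := by noncomm_ring
    _ = d := by rw [h.inv_mul_mul_self, ← mul_assoc, hd]

theorem add (h : IsCoreInverse a x) (hd : a * x * d = d) (hu : IsUnit (1 + x * d)) :
    IsCoreInverse (a + d) (Ring.inverse (1 + x * d) * x) := by
  set u := 1 + x * d with hu_def
  set v := Ring.inverse u
  have hvu : v * u = 1 := Ring.inverse_mul_cancel u hu
  have huv : u * v = 1 := Ring.mul_inverse_cancel u hu
  have hfactor : a * u = a + d := by
    rw [mul_add, mul_one, ← mul_assoc, hd]
  have hproj : (a + d) * (v * x) = a * x := by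
    rw [← hfactor, mul_assoc, ← mul_assoc u, huv, one_mul]
  have hsq : x * (a + d) * (a + d) = u * (a + d) := by
    calc x * (a + d) * (a + d) = x * a * a + x * a * d + x * d * (a + d) := by noncomm_ring
      _ = u * (a + d) := by
        rw [h.inv_mul_mul_self, h.inv_mul_mul_of_mul_inv_mul hd, hu_def]; noncomm_ring
  have hcompl : (1 - a * x) * u = 1 - a * x := by
    calc (1 - a * x) * u = 1 - a * x + (x - a * x * x) * d := by rw [hu_def]; noncomm_ring
      _ = 1 - a * x := by rw [h.mul_inv_mul_inv, sub_self, zero_mul, add_zero]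
  refine ⟨?_, ?_, ?_, ?_, ?_⟩
  · rw [hproj, mul_add, h.mul_inv_mul, hd]
  · rw [mul_assoc, hproj, mul_assoc v, ← mul_assoc x, h.inv_mul_inv]
  · rw [hproj]; exact h.isSelfAdjoint_mul_inv
  · rw [mul_assoc v, mul_assoc v, hsq, ← mul_assoc, hvu, one_mul]
  · have hv : (1 - a * x) * v = 1 - a * x := by
      rw [← hcompl, mul_assoc, huv, mul_one, hcompl]
    have hzero : (1 - a * x) * (v * x) = 0 := by
      rw [← mul_assoc, hv, sub_mul, one_mul, h.mul_inv_mul_inv, sub_self]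
    rw [hproj]
    calc a * x * (v * x) = v * x - (1 - a * x) * (v * x) := by noncomm_ring
      _ = v * x := by rw [hzero, sub_zero]

end IsCoreInverse

section NormBounds

variable {R : Type*} [NormedRing R] {a : R}

lemma norm_div_one_add_le_norm_inverse_one_add_mul (hone : ‖(1 : R)‖ ≤ 1)
    (hu : IsUnit (1 + a)) (x : R) :
    ‖x‖ / (1 + ‖a‖) ≤ ‖Ring.inverse (1 + a) * x‖ := by
  rw [div_le_iff₀ (by positivity)]
  calc ‖x‖ = ‖(1 + a) * (Ring.inverse (1 + a) * x)‖ := by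
        rw [← mul_assoc, Ring.mul_inverse_cancel _ hu, one_mul]
    _ ≤ (‖(1 : R)‖ + ‖a‖) * ‖Ring.inverse (1 + a) * x‖ :=
        (norm_mul_le _ _).trans (by gcongr; exact norm_add_le _ _)
    _ ≤ ‖Ring.inverse (1 + a) * x‖ * (1 + ‖a‖) := by
        rw [mul_comm]; gcongr

variable [HasSummableGeomSeries R]

lemma isUnit_one_add_of_norm_lt_one (ha : ‖a‖ < 1) : IsUnit (1 + a) := by
  simpa using isUnit_one_sub_of_norm_lt_one (x := -a) (by rwa [norm_neg])

lemma norm_inverse_one_add_le (hone : ‖(1 : R)‖ ≤ 1) (ha : ‖a‖ < 1) :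
    ‖Ring.inverse (1 + a)‖ ≤ (1 - ‖a‖)⁻¹ := by
  have ha' : ‖-a‖ < 1 := by rwa [norm_neg]
  have hbound := tsum_geometric_le_of_norm_lt_one (-a) ha'
  rw [geom_series_eq_inverse _ ha', sub_neg_eq_add, norm_neg] at hbound
  linarith

lemma norm_inverse_one_add_mul_le (hone : ‖(1 : R)‖ ≤ 1) (ha : ‖a‖ < 1) (x : R) :
    ‖Ring.inverse (1 + a) * x‖ ≤ ‖x‖ / (1 - ‖a‖) := by
  calc ‖Ring.inverse (1 + a) * x‖ ≤ ‖Ring.inverse (1 + a)‖ * ‖x‖ := norm_mul_le _ _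
    _ ≤ (1 - ‖a‖)⁻¹ * ‖x‖ := by gcongr; exact norm_inverse_one_add_le hone ha
    _ = ‖x‖ / (1 - ‖a‖) := by rw [inv_mul_eq_div]

end NormBounds

theorem stmt_10 {X : Type*} [NormedAddCommGroup X] [InnerProductSpace ℂ X]
    [CompleteSpace X] (T S δT : X →L[ℂ] X)
    (h1 : T * S * T = T)
    (h2 : S * T * S = S)
    (h3 : ContinuousLinearMap.adjoint (T * S) = T * S)
    (h6 : S * T * T = T)
    (h7 : T * S * S = S)
    (hnorm : ‖S * δT‖ < 1)
    (hd : T * S * δT = δT) :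
    (T + δT) * (Ring.inverse (1 + S * δT) * S) * (T + δT) = T + δT ∧
    (Ring.inverse (1 + S * δT) * S) * (T + δT) * (Ring.inverse (1 + S * δT) * S) =
      Ring.inverse (1 + S * δT) * S ∧
    ContinuousLinearMap.adjoint ((T + δT) * (Ring.inverse (1 + S * δT) * S)) =
      (T + δT) * (Ring.inverse (1 + S * δT) * S) ∧
    (Ring.inverse (1 + S * δT) * S) * (T + δT) * (T + δT) = T + δT ∧
    (T + δT) * (Ring.inverse (1 + S * δT) * S) * (Ring.inverse (1 + S * δT) * S) =
      Ring.inverse (1 + S * δT) * S ∧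
    ‖S‖ / (1 + ‖S * δT‖) ≤ ‖Ring.inverse (1 + S * δT) * S‖ ∧
    ‖Ring.inverse (1 + S * δT) * S‖ ≤ ‖S‖ / (1 - ‖S * δT‖) := by
  have hS : IsCoreInverse T S :=
    ⟨h1, h2, by rw [IsSelfAdjoint, ContinuousLinearMap.star_eq_adjoint, h3], h6, h7⟩
  have hu := isUnit_one_add_of_norm_lt_one hnorm
  have hB := hS.add hd hu
  have hone : ‖(1 : X →L[ℂ] X)‖ ≤ 1 := ContinuousLinearMap.norm_id_le
  refine ⟨hB.mul_inv_mul, hB.inv_mul_inv, ?_, hB.inv_mul_mul_self, hB.mul_inv_mul_inv,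
    norm_div_one_add_le_norm_inverse_one_add_mul hone hu S,
    norm_inverse_one_add_mul_le hone hnorm S⟩
  rw [← ContinuousLinearMap.star_eq_adjoint]
  exact hB.isSelfAdjoint_mul_inv
end

section
/- Let X be a Hilbert space, T ∈ B(X) with a {1,3,7}-inverse S, and δT ∈ B(X) with I + S·δT invertible. If B = (I + S·δT)⁻¹S is a {1,3,7}-inverse of T̄ = T + δT, then R(T̄) = R(T). -/
/-!
Write `P = T S` and `Q = T̄ B`. The {1,3}-conditions make `P` and `Q` orthogonal projections
with `R(P) = R(T)` and `R(Q) = R(T̄)`. A direct computation with `u = (I + S δT)⁻¹` gives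
`(I - Q)(I + δT S) = I - P` and `(I - P)(I - δT u S) = I - Q`, so each of the projections
`I - P`, `I - Q` is a right multiple of the other; for self-adjoint idempotents this forces
`I - P = I - Q`, hence `P = Q` and the two ranges agree.
-/

theorem IsStarProjection.mul_of_mul_mul_eq {R : Type*} [Semigroup R] [Star R] {a b : R}
    (h1 : a * b * a = a) (h3 : star (a * b) = a * b) : IsStarProjection (a * b) where
  isIdempotentElem := by rw [IsIdempotentElem, ← mul_assoc, h1]
  isSelfAdjoint := h3

theorem IsStarProjection.eq_of_mul_eq_of_mul_eq {R : Type*} [Semigroup R] [StarMul R]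
    {p q v w : R} (hp : IsStarProjection p) (hq : IsStarProjection q)
    (hqp : q * v = p) (hpq : p * w = q) : p = q := by
  have hq_left : q * p = p := by rw [← hqp, ← mul_assoc, hq.isIdempotentElem.eq]
  have hp_left : p * q = q := by rw [← hpq, ← mul_assoc, hp.isIdempotentElem.eq]
  calc p = star p := hp.isSelfAdjoint.star_eq.symm
    _ = star (q * p) := by rw [hq_left]
    _ = p * q := by rw [star_mul, hp.isSelfAdjoint.star_eq, hq.isSelfAdjoint.star_eq]
    _ = q := hp_left

section PerturbedProjection

variable {R : Type*} [Ring R] (T S d u : R)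

theorem one_sub_perturbed_mul_eq (hu : u * (1 + S * d) = 1) :
    (1 - (T + d) * (u * S)) * (1 + d * S) = 1 - T * S := by
  have hQ : (T + d) * (u * S) * (1 + d * S) = (T + d) * S := by
    calc (T + d) * (u * S) * (1 + d * S) = (T + d) * (u * (1 + S * d)) * S := by noncomm_ring
      _ = (T + d) * S := by rw [hu, mul_one]
  rw [sub_mul, one_mul, hQ]
  noncomm_ring

theorem one_sub_mul_eq_one_sub_perturbed (hu : (1 + S * d) * u = 1) :
    (1 - T * S) * (1 - d * (u * S)) = 1 - (T + d) * (u * S) := by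
  have hu' : u = 1 - S * d * u := by rw [← hu]; noncomm_ring
  calc (1 - T * S) * (1 - d * (u * S)) = 1 - d * (u * S) - T * (1 - S * d * u) * S := by
        noncomm_ring
    _ = 1 - (T + d) * (u * S) := by rw [← hu']; noncomm_ring

end PerturbedProjection

theorem LinearMap.range_comp_eq_of_comp_comp_eq {R M N : Type*} [Semiring R]
    [AddCommMonoid M] [AddCommMonoid N] [Module R M] [Module R N]
    {f : M →ₗ[R] N} {g : N →ₗ[R] M} (h : f ∘ₗ g ∘ₗ f = f) : range (f ∘ₗ g) = range f := by
  refine le_antisymm (range_comp_le_range g f) ?_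
  rintro _ ⟨x, rfl⟩
  exact ⟨f x, LinearMap.congr_fun h x⟩

theorem stmt_13_general {X : Type*} [NormedAddCommGroup X] [InnerProductSpace ℂ X]
    [CompleteSpace X] (T S δT : X →L[ℂ] X)
    (h1 : T * S * T = T)
    (h3 : ContinuousLinearMap.adjoint (T * S) = T * S)
    (hinv : IsUnit (1 + S * δT))
    (hB1 : (T + δT) * (Ring.inverse (1 + S * δT) * S) * (T + δT) = T + δT)
    (hB3 : ContinuousLinearMap.adjoint ((T + δT) * (Ring.inverse (1 + S * δT) * S)) =
      (T + δT) * (Ring.inverse (1 + S * δT) * S)) :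
    LinearMap.range ((T + δT : X →L[ℂ] X) : X →ₗ[ℂ] X) = LinearMap.range (T : X →ₗ[ℂ] X) := by
  set u := Ring.inverse (1 + S * δT)
  have hP := IsStarProjection.mul_of_mul_mul_eq h1 (by rwa [ContinuousLinearMap.star_eq_adjoint])
  have hQ := IsStarProjection.mul_of_mul_mul_eq hB1 (by rwa [ContinuousLinearMap.star_eq_adjoint])
  have hPQ : T * S = (T + δT) * (u * S) :=
    sub_right_injective <| hP.one_sub.eq_of_mul_eq_of_mul_eq hQ.one_sub
      (one_sub_perturbed_mul_eq T S δT u (Ring.inverse_mul_cancel _ hinv))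
      (one_sub_mul_eq_one_sub_perturbed T S δT u (Ring.mul_inverse_cancel _ hinv))
  have hrange : ∀ A C : X →L[ℂ] X, A * C * A = A →
      LinearMap.range ((A * C : X →L[ℂ] X) : X →ₗ[ℂ] X) = LinearMap.range (A : X →ₗ[ℂ] X) :=
    fun A C h => LinearMap.range_comp_eq_of_comp_comp_eq (congrArg ContinuousLinearMap.toLinearMap h)
  rw [← hrange _ _ hB1, ← hPQ, hrange _ _ h1]

theorem stmt_13 {X : Type*} [NormedAddCommGroup X] [InnerProductSpace ℂ X]
    [CompleteSpace X] (T S δT : X →L[ℂ] X)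
    (h1 : T * S * T = T)
    (h3 : ContinuousLinearMap.adjoint (T * S) = T * S)
    (h7 : T * S * S = S)
    (hinv : IsUnit (1 + S * δT))
    (hB1 : (T + δT) * (Ring.inverse (1 + S * δT) * S) * (T + δT) = T + δT)
    (hB3 : ContinuousLinearMap.adjoint ((T + δT) * (Ring.inverse (1 + S * δT) * S)) =
      (T + δT) * (Ring.inverse (1 + S * δT) * S))
    (hB7 : (T + δT) * (Ring.inverse (1 + S * δT) * S) * (Ring.inverse (1 + S * δT) * S) =
      Ring.inverse (1 + S * δT) * S) :
    LinearMap.range ((T + δT : X →L[ℂ] X) : X →ₗ[ℂ] X) = LinearMap.range (T : X →ₗ[ℂ] X) :=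
  stmt_13_general T S δT h1 h3 hinv hB1 hB3
end

section
/- Let X be a Hilbert space, T ∈ B(X) with a {1,3,7}-inverse S, and δT ∈ B(X) with I + S·δT invertible. The following are equivalent: (i) R(T + δT) ⊆ R(T); (ii) R(T + δT) = R(T); (iii) TS(T + δT) = T + δT; (iv) TS·δT = δT. -/
/-!
Since `TST = T`, the operator `TS` fixes exactly the range of `T`, which gives (i) ⇔ (iii) ⇔ (iv).
Under (iv), `T + δT = T(I + SδT)` is `T` composed with an invertible operator, so the ranges coincide.
-/

namespace ContinuousLinearMap

variable {R M : Type*} [Semiring R] [TopologicalSpace M] [AddCommMonoid M] [Module R M]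

theorem range_le_range_iff_mul_mul_eq {T S : M →L[R] M} (hTST : T * S * T = T)
    (A : M →L[R] M) :
    LinearMap.range (A : M →ₗ[R] M) ≤ LinearMap.range (T : M →ₗ[R] M) ↔ T * S * A = A := by
  constructor
  · intro hA
    ext x
    obtain ⟨y, hy⟩ := hA (LinearMap.mem_range_self (A : M →ₗ[R] M) x)
    change T (S (A x)) = A x
    rw [coe_coe, coe_coe] at hy
    rw [← hy]
    exact DFunLike.congr_fun hTST y
  · intro hA _ ⟨x, hx⟩
    exact ⟨S (A x), hx ▸ DFunLike.congr_fun hA x⟩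

theorem range_mul_of_isUnit (T : M →L[R] M) {U : M →L[R] M} (hU : IsUnit U) :
    LinearMap.range ((T * U : M →L[R] M) : M →ₗ[R] M) = LinearMap.range (T : M →ₗ[R] M) := by
  obtain ⟨u, rfl⟩ := hU
  refine LinearMap.range_comp_of_range_eq_top _ (LinearMap.range_eq_top.2 fun x => ?_)
  exact ⟨(↑u⁻¹ : M →L[R] M) x, DFunLike.congr_fun u.mul_inv x⟩

end ContinuousLinearMap

open ContinuousLinearMap in
theorem stmt_15_general {X : Type*} [NormedAddCommGroup X] [InnerProductSpace ℂ X]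
    (T S δT : X →L[ℂ] X)
    (h1 : T * S * T = T)
    (hinv : IsUnit (1 + S * δT)) :
    [LinearMap.range ((T + δT : X →L[ℂ] X) : X →ₗ[ℂ] X) ≤ LinearMap.range (T : X →ₗ[ℂ] X),
     LinearMap.range ((T + δT : X →L[ℂ] X) : X →ₗ[ℂ] X) = LinearMap.range (T : X →ₗ[ℂ] X),
     T * S * (T + δT) = T + δT,
     T * S * δT = δT].TFAE := by
  tfae_have 1 ↔ 3 := range_le_range_iff_mul_mul_eq h1 _
  tfae_have 3 ↔ 4 := by rw [mul_add, h1, add_right_inj]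
  tfae_have 4 → 2 := fun h => by
    rw [show T + δT = T * (1 + S * δT) by rw [mul_add, mul_one, ← mul_assoc, h],
      range_mul_of_isUnit T hinv]
  tfae_have 2 → 1 := le_of_eq
  tfae_finish

theorem stmt_15 {X : Type*} [NormedAddCommGroup X] [InnerProductSpace ℂ X]
    [CompleteSpace X] (T S δT : X →L[ℂ] X)
    (h1 : T * S * T = T)
    (h3 : ContinuousLinearMap.adjoint (T * S) = T * S)
    (h7 : T * S * S = S)
    (hinv : IsUnit (1 + S * δT)) :
    [LinearMap.range ((T + δT : X →L[ℂ] X) : X →ₗ[ℂ] X) ≤ LinearMap.range (T : X →ₗ[ℂ] X),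
     LinearMap.range ((T + δT : X →L[ℂ] X) : X →ₗ[ℂ] X) = LinearMap.range (T : X →ₗ[ℂ] X),
     T * S * (T + δT) = T + δT,
     T * S * δT = δT].TFAE :=
  stmt_15_general T S δT h1 hinv
end

section
/- Let X be a Hilbert space, T ∈ B(X) with a core inverse S, and δT ∈ B(X) with I + S·δT invertible and TS·δT = δT. Then the core inverse B = (I + S·δT)⁻¹S of T̄ = T + δT satisfies T̄B = TS, i.e., the orthogonal projection onto R(T̄) equals the orthogonal projection onto R(T). -/
theorem stmt_17 {X : Type*} [NormedAddCommGroup X] [InnerProductSpace ℂ X]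
    [CompleteSpace X] (T S δT : X →L[ℂ] X)
    (h1 : T * S * T = T)
    (h2 : S * T * S = S)
    (h3 : ContinuousLinearMap.adjoint (T * S) = T * S)
    (h6 : S * T * T = T)
    (h7 : T * S * S = S)
    (hinv : IsUnit (1 + S * δT))
    (hd : T * S * δT = δT) :
    (T + δT) * (Ring.inverse (1 + S * δT) * S) = T * S := by
  have key : T + δT = T * (1 + S * δT) := by
    rw [mul_add, mul_one, ← mul_assoc, hd]
  rw [key, mul_assoc, ← mul_assoc (1 + S * δT), Ring.mul_inverse_cancel _ hinv, one_mul]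
end
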